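/- arXiv:2409.05911 — 2 statements merged into one kernel-verified Lean document; each statement's English description precedes it below -/
import Mathlib

section
/- Fix s ≥ 4 and let τ : (Fin s → ℤ) → ℂ be a solution of the octahedral relation, i.e. for every n : Fin s → ℤ with Σᵢ nᵢ = −2 and all indices α < β < γ < δ in Fin s: τ(n + e^α + e^β)·τ(n + e^γ + e^δ) − τ(n + e^α + e^γ)·τ(n + e^β + e^δ) + τ(n + e^α + e^δ)·τ(n + e^β + e^γ) = 0. Then for every permutation σ of Fin s, the function τ'(n) = (−1)^{q_σ(n)}·τ(σ(n)), where σ(n) denotes the tuple with entries permuted by σ and q_σ(n) = Σ_{α<β, σ(α)>σ(β)} n_α·n_β, is again a solution of the octahedral relation. -/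
open Finset

/-- The octahedral (discrete Hirota) relation for a discrete tau function
`τ : (Fin s → ℤ) → ℂ`: for every `n` of degree `−2` and all indices
`α < β < γ < δ`,
`τ(n+e^α+e^β) τ(n+e^γ+e^δ) − τ(n+e^α+e^γ) τ(n+e^β+e^δ)
  + τ(n+e^α+e^δ) τ(n+e^β+e^γ) = 0`. -/
def OctahedralRelation {s : ℕ} (τ : (Fin s → ℤ) → ℂ) : Prop :=
  ∀ n : Fin s → ℤ, (∑ i, n i) = -2 →
    ∀ α β γ δ : Fin s, α < β → β < γ → γ < δ →
      τ (n + Pi.single α 1 + Pi.single β 1) * τ (n + Pi.single γ 1 + Pi.single δ 1)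
        - τ (n + Pi.single α 1 + Pi.single γ 1) * τ (n + Pi.single β 1 + Pi.single δ 1)
        + τ (n + Pi.single α 1 + Pi.single δ 1) * τ (n + Pi.single β 1 + Pi.single γ 1) = 0

/-- The quadratic form `q_σ(n) = ∑_{α<β, σ(α)>σ(β)} n_α n_β`, summed over the
inversions of the permutation `σ`. -/
def qForm {s : ℕ} (σ : Equiv.Perm (Fin s)) (n : Fin s → ℤ) : ℤ :=
  ∑ p ∈ univ.filter (fun p : Fin s × Fin s => p.1 < p.2 ∧ σ p.2 < σ p.1),
    n p.1 * n p.2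

/-- Plücker three-term identity for an antisymmetric function, extended from
sorted quadruples to arbitrary quadruples of distinct points. -/
lemma pluecker_anti {ι : Type*} [LinearOrder ι] (G : ι → ι → ℂ)
    (hG : ∀ a b, G a b = - G b a)
    (h : ∀ w x y z : ι, w < x → x < y → y < z →
      G w x * G y z - G w y * G x z + G w z * G x y = 0)
    (A B C D : ι) (nAB : A ≠ B) (nAC : A ≠ C) (nAD : A ≠ D)
    (nBC : B ≠ C) (nBD : B ≠ D) (nCD : C ≠ D) :
    G A B * G C D - G A C * G B D + G A D * G B C = 0 := by
  rcases nAB.lt_or_gt with h1 | h1 <;>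
  rcases nAC.lt_or_gt with h2 | h2 <;>
  rcases nAD.lt_or_gt with h3 | h3 <;>
  rcases nBC.lt_or_gt with h4 | h4 <;>
  rcases nBD.lt_or_gt with h5 | h5 <;>
  rcases nCD.lt_or_gt with h6 | h6
  · first
    | linear_combination h A B C D h1 h4 h6
    | linear_combination -h A B C D h1 h4 h6
  · rw [hG C D]
    first
    | linear_combination h A B D C h1 h5 h6
    | linear_combination -h A B D C h1 h5 h6
  · exact absurd (h4.trans h6) (lt_asymm h5)
  · rw [hG C D, hG B D]
    first
    | linear_combination h A D B C h3 h5 h4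
    | linear_combination -h A D B C h3 h5 h4
  · rw [hG B C]
    first
    | linear_combination h A C B D h2 h4 h5
    | linear_combination -h A C B D h2 h4 h5
  · exact absurd (h5.trans h6) (lt_asymm h4)
  · rw [hG B D, hG B C]
    first
    | linear_combination h A C D B h2 h6 h5
    | linear_combination -h A C D B h2 h6 h5
  · rw [hG C D, hG B D, hG B C]
    first
    | linear_combination h A D C B h3 h6 h4
    | linear_combination -h A D C B h3 h6 h4
  · exact absurd (h1.trans h5) (lt_asymm h3)
  · exact absurd (h1.trans h5) (lt_asymm h3)
  · exact absurd (h2.trans h6) (lt_asymm h3)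
  · rw [hG C D, hG B D, hG A D]
    first
    | linear_combination h D A B C h3 h1 h4
    | linear_combination -h D A B C h3 h1 h4
  · exact absurd (h1.trans h5) (lt_asymm h3)
  · exact absurd (h1.trans h5) (lt_asymm h3)
  · exact absurd (h2.trans h6) (lt_asymm h3)
  · rw [hG C D, hG B D, hG A D, hG B C]
    first
    | linear_combination h D A C B h3 h2 h4
    | linear_combination -h D A C B h3 h2 h4
  · exact absurd (h1.trans h4) (lt_asymm h2)
  · exact absurd (h1.trans h4) (lt_asymm h2)
  · exact absurd (h1.trans h4) (lt_asymm h2)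
  · exact absurd (h1.trans h4) (lt_asymm h2)
  · rw [hG A C, hG B C]
    first
    | linear_combination h C A B D h2 h1 h5
    | linear_combination -h C A B D h2 h1 h5
  · exact absurd (h3.trans h6) (lt_asymm h2)
  · rw [hG A C, hG B D, hG B C]
    first
    | linear_combination h C A D B h2 h3 h5
    | linear_combination -h C A D B h2 h3 h5
  · exact absurd (h3.trans h6) (lt_asymm h2)
  · exact absurd (h1.trans h4) (lt_asymm h2)
  · exact absurd (h1.trans h4) (lt_asymm h2)
  · exact absurd (h1.trans h4) (lt_asymm h2)
  · exact absurd (h1.trans h4) (lt_asymm h2)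
  · exact absurd (h1.trans h5) (lt_asymm h3)
  · exact absurd (h1.trans h5) (lt_asymm h3)
  · rw [hG A C, hG B D, hG A D, hG B C]
    first
    | linear_combination h C D A B h6 h3 h1
    | linear_combination -h C D A B h6 h3 h1
  · rw [hG C D, hG A C, hG B D, hG A D, hG B C]
    first
    | linear_combination h D C A B h6 h2 h1
    | linear_combination -h D C A B h6 h2 h1
  · rw [hG A B]
    first
    | linear_combination h B A C D h1 h2 h6
    | linear_combination -h B A C D h1 h2 h6
  · rw [hG A B, hG C D]
    first
    | linear_combination h B A D C h1 h3 h6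
    | linear_combination -h B A D C h1 h3 h6
  · exact absurd (h3.trans h5) (lt_asymm h1)
  · exact absurd (h3.trans h5) (lt_asymm h1)
  · exact absurd (h2.trans h4) (lt_asymm h1)
  · exact absurd (h2.trans h4) (lt_asymm h1)
  · exact absurd (h2.trans h4) (lt_asymm h1)
  · exact absurd (h2.trans h4) (lt_asymm h1)
  · exact absurd (h2.trans h6) (lt_asymm h3)
  · rw [hG A B, hG C D, hG A D]
    first
    | linear_combination h B D A C h5 h3 h2
    | linear_combination -h B D A C h5 h3 h2
  · exact absurd (h2.trans h6) (lt_asymm h3)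
  · rw [hG A B, hG C D, hG B D, hG A D]
    first
    | linear_combination h D B A C h5 h1 h2
    | linear_combination -h D B A C h5 h1 h2
  · exact absurd (h2.trans h4) (lt_asymm h1)
  · exact absurd (h2.trans h4) (lt_asymm h1)
  · exact absurd (h2.trans h4) (lt_asymm h1)
  · exact absurd (h2.trans h4) (lt_asymm h1)
  · rw [hG A B, hG A C]
    first
    | linear_combination h B C A D h4 h2 h3
    | linear_combination -h B C A D h4 h2 h3
  · exact absurd (h3.trans h6) (lt_asymm h2)
  · exact absurd (h3.trans h5) (lt_asymm h1)
  · exact absurd (h3.trans h5) (lt_asymm h1)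
  · rw [hG A B, hG A C, hG B C]
    first
    | linear_combination h C B A D h4 h1 h3
    | linear_combination -h C B A D h4 h1 h3
  · exact absurd (h3.trans h6) (lt_asymm h2)
  · exact absurd (h3.trans h5) (lt_asymm h1)
  · exact absurd (h3.trans h5) (lt_asymm h1)
  · rw [hG A B, hG A C, hG A D]
    first
    | linear_combination h B C D A h4 h6 h3
    | linear_combination -h B C D A h4 h6 h3
  · rw [hG A B, hG C D, hG A C, hG A D]
    first
    | linear_combination h B D C A h5 h6 h2
    | linear_combination -h B D C A h5 h6 h2
  · exact absurd (h4.trans h6) (lt_asymm h5)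
  · rw [hG A B, hG C D, hG A C, hG B D, hG A D]
    first
    | linear_combination h D B C A h5 h4 h2
    | linear_combination -h D B C A h5 h4 h2
  · rw [hG A B, hG A C, hG A D, hG B C]
    first
    | linear_combination h C B D A h4 h5 h3
    | linear_combination -h C B D A h4 h5 h3
  · exact absurd (h5.trans h6) (lt_asymm h4)
  · rw [hG A B, hG A C, hG B D, hG A D, hG B C]
    first
    | linear_combination h C D B A h6 h5 h1
    | linear_combination -h C D B A h6 h5 h1
  · rw [hG A B, hG C D, hG A C, hG B D, hG A D, hG B C]
    first
    | linear_combination h D C B A h6 h4 h1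
    | linear_combination -h D C B A h6 h4 h1


/-- Cross term of the quadratic form `qForm`. -/
def crossForm {s : ℕ} (σ : Equiv.Perm (Fin s)) (n m : Fin s → ℤ) : ℤ :=
  ∑ p ∈ univ.filter (fun p : Fin s × Fin s => p.1 < p.2 ∧ σ p.2 < σ p.1),
    (n p.1 * m p.2 + m p.1 * n p.2)

lemma qForm_add {s : ℕ} (σ : Equiv.Perm (Fin s)) (n m : Fin s → ℤ) :
    qForm σ (n + m) = qForm σ n + crossForm σ n m + qForm σ m := by
  simp only [qForm, crossForm, ← Finset.sum_add_distrib]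
  exact Finset.sum_congr rfl fun p _ => by simp only [Pi.add_apply]; ring

lemma crossForm_add_left {s : ℕ} (σ : Equiv.Perm (Fin s)) (n m k : Fin s → ℤ) :
    crossForm σ (n + m) k = crossForm σ n k + crossForm σ m k := by
  simp only [crossForm, ← Finset.sum_add_distrib]
  exact Finset.sum_congr rfl fun p _ => by simp only [Pi.add_apply]; ring

lemma qForm_single {s : ℕ} (σ : Equiv.Perm (Fin s)) (a : Fin s) :
    qForm σ (Pi.single a 1) = 0 := by
  apply Finset.sum_eq_zero
  intro p hp
  rw [Finset.mem_filter] at hp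
  have hne : p.1 ≠ p.2 := ne_of_lt hp.2.1
  simp only [Pi.single_apply]
  split_ifs with ha hb hb <;> simp_all

lemma crossForm_single_single {s : ℕ} (σ : Equiv.Perm (Fin s)) {a b : Fin s}
    (hab : a < b) :
    crossForm σ (Pi.single a 1) (Pi.single b 1) = if σ b < σ a then 1 else 0 := by
  have : crossForm σ (Pi.single a 1) (Pi.single b 1)
      = ∑ p ∈ univ.filter (fun p : Fin s × Fin s => p.1 < p.2 ∧ σ p.2 < σ p.1),
          (if p = (a, b) then (1 : ℤ) else 0) := by
    refine Finset.sum_congr rfl fun p hp => ?_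
    rw [Finset.mem_filter] at hp
    simp only [Pi.single_apply]
    by_cases h1 : p = (a, b)
    · subst h1
      simp [hab.ne, hab.ne']
    · have : ¬(p.1 = a ∧ p.2 = b) := by
        intro hc; exact h1 (Prod.ext hc.1 hc.2)
      have h2 : ¬(p.1 = b ∧ p.2 = a) := by
        intro hc
        rw [hc.1, hc.2] at hp
        exact absurd hp.2.1 (not_lt_of_gt hab)
      rw [if_neg h1]
      rcases not_and_or.mp this with h | h <;> rcases not_and_or.mp h2 with h' | h' <;>
        simp [h, h']
  rw [this, Finset.sum_ite_eq' _ (a, b)]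
  simp [Finset.mem_filter, hab]

/-- **The symmetric group acts on solutions of the octahedral relation:**
if `τ` satisfies the octahedral relation and `σ` is a permutation, then
`τ'(n) = (−1)^{q_σ(n)} τ(σ(n))`, where `σ(n)ᵢ = n_{σ⁻¹(i)}`, also satisfies it. -/
theorem octahedral_perm_action
    (s : ℕ) (hs : 4 ≤ s) (τ : (Fin s → ℤ) → ℂ)
    (hτ : OctahedralRelation τ) (σ : Equiv.Perm (Fin s)) :
    OctahedralRelation (fun n => (-1 : ℂ) ^ qForm σ n * τ (n ∘ σ.symm)) := by
  intro n hn α β γ δ hαβ hβγ hγδ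
  dsimp only
  have hm : (∑ i, (n ∘ ⇑σ.symm) i) = -2 := (Equiv.sum_comp σ.symm n).trans hn
  have hcomp : ∀ a b : Fin s, (n + Pi.single a 1 + Pi.single b 1) ∘ ⇑σ.symm
      = (n ∘ ⇑σ.symm) + Pi.single (σ a) 1 + Pi.single (σ b) 1 := by
    intro a b
    funext i
    simp [Pi.single_apply, Equiv.symm_apply_eq]
  set G : Fin s → Fin s → ℂ := fun a b =>
    if a < b then τ ((n ∘ ⇑σ.symm) + Pi.single a 1 + Pi.single b 1)
    else if b < a then -τ ((n ∘ ⇑σ.symm) + Pi.single b 1 + Pi.single a 1)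
    else 0 with hGdef
  have hG : ∀ a b, G a b = - G b a := by
    intro a b
    rcases lt_trichotomy a b with h | h | h
    · simp [hGdef, h, asymm h]
    · simp [hGdef, h]
    · simp [hGdef, h, asymm h]
  have hsort : ∀ w x y z : Fin s, w < x → x < y → y < z →
      G w x * G y z - G w y * G x z + G w z * G x y = 0 := by
    intro w x y z h1 h2 h3
    have H := hτ (n ∘ ⇑σ.symm) hm w x y z h1 h2 h3
    simpa [hGdef, h1, h2, h3, h1.trans h2, h2.trans h3, (h1.trans h2).trans h3]
      using H
  have key : ∀ a b : Fin s, a < b →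
      (-1 : ℂ) ^ qForm σ (n + Pi.single a 1 + Pi.single b 1) *
        τ ((n + Pi.single a 1 + Pi.single b 1) ∘ ⇑σ.symm)
      = (-1 : ℂ) ^ (qForm σ n + crossForm σ n (Pi.single a 1)
          + crossForm σ n (Pi.single b 1)) * G (σ a) (σ b) := by
    intro a b hab
    rw [hcomp]
    have hq : qForm σ (n + Pi.single a 1 + Pi.single b 1)
        = qForm σ n + crossForm σ n (Pi.single a 1) + crossForm σ n (Pi.single b 1)
          + (if σ b < σ a then 1 else 0) := by
      rw [qForm_add, qForm_add, crossForm_add_left, qForm_single, qForm_single,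
        crossForm_single_single σ hab]
      ring
    rw [hq, zpow_add₀ (by norm_num : (-1 : ℂ) ≠ 0)]
    rcases lt_trichotomy (σ a) (σ b) with h | h | h
    · rw [if_neg (asymm h)]
      simp [hGdef, h]
    · exact absurd (σ.injective h) hab.ne
    · rw [if_pos h]
      have harg : (n ∘ ⇑σ.symm) + Pi.single (σ a) 1 + Pi.single (σ b) 1
          = (n ∘ ⇑σ.symm) + Pi.single (σ b) 1 + Pi.single (σ a) 1 := by
        rw [add_right_comm]
      rw [harg]
      simp [hGdef, h, asymm h]
  have hαγ : α < γ := hαβ.trans hβγ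
  have hβδ : β < δ := hβγ.trans hγδ
  have hαδ : α < δ := hαγ.trans hγδ
  rw [key α β hαβ, key γ δ hγδ, key α γ hαγ, key β δ hβδ, key α δ hαδ, key β γ hβγ]
  have combine : ∀ (E1 E2 : ℤ) (x y : ℂ),
      ((-1 : ℂ) ^ E1 * x) * ((-1 : ℂ) ^ E2 * y) = (-1 : ℂ) ^ (E1 + E2) * (x * y) := by
    intro E1 E2 x y
    rw [zpow_add₀ (by norm_num : (-1 : ℂ) ≠ 0)]
    ring
  rw [combine, combine, combine]
  set Q := qForm σ n with hQ
  set Cα := crossForm σ n (Pi.single α 1)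
  set Cβ := crossForm σ n (Pi.single β 1)
  set Cγ := crossForm σ n (Pi.single γ 1)
  set Cδ := crossForm σ n (Pi.single δ 1)
  have e2 : Q + Cα + Cγ + (Q + Cβ + Cδ) = Q + Cα + Cβ + (Q + Cγ + Cδ) := by ring
  have e3 : Q + Cα + Cδ + (Q + Cβ + Cγ) = Q + Cα + Cβ + (Q + Cγ + Cδ) := by ring
  rw [e2, e3]
  have hne : ∀ x y : Fin s, x < y → σ x ≠ σ y := fun x y hxy =>
    fun hc => hxy.ne (σ.injective hc)
  have hP := pluecker_anti G hG hsort (σ α) (σ β) (σ γ) (σ δ)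
    (hne α β hαβ) (hne α γ hαγ) (hne α δ hαδ) (hne β γ hβγ) (hne β δ hβδ)
    (hne γ δ hγδ)
  linear_combination ((-1 : ℂ) ^ (Q + Cα + Cβ + (Q + Cγ + Cδ))) * hP
end

section
/- Fix s ≥ 4 and let τ : (Fin s → ℤ) → ℂ be a solution of the octahedral relation, i.e. for every n : Fin s → ℤ with Σᵢ nᵢ = −2 and all indices α < β < γ < δ in Fin s: τ(n + e^α + e^β)·τ(n + e^γ + e^δ) − τ(n + e^α + e^γ)·τ(n + e^β + e^δ) + τ(n + e^α + e^δ)·τ(n + e^β + e^γ) = 0. Let σ be the transposition of two adjacent indices i and i+1 in Fin s. Then the function τ'(n) = (−1)^{n_i·n_{i+1}}·τ(σ(n)), where σ(n) is obtained from n by swapping the entries in positions i and i+1, is again a solution of the octahedral relation. -/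
/-!
Write `σ = swap i j` with `j = i + 1` and `τ'(n) = (-1)^(n_i n_j) τ(σ n)`. Expanding the exponent,
`τ'(n + u) = (-1)^(n_i n_j) (-1)^(n_i u_j + u_i n_j) (-1)^(u_i u_j) τ(σ n + σ u)`. The middle factor
is a character of `u`, hence common to the three products of the relation at `n`, and for
`u = e^a + e^b` with `a < b` the last factor is `-1` exactly when `(a, b) = (i, j)`. If `(i, j)` is
not a pair of consecutive indices of `α < β < γ < δ`, then `σ` keeps them in increasing order and
the relation for `τ'` is a nonzero multiple of the one for `τ` at `σ n`. Otherwise `σ` permutes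
the four indices, exchanging two of the products of the relation, and the sign flip of the third
product turns the relation into minus itself.
-/

open Finset

variable {s : ℕ}

def octahedralExpr (τ : (Fin s → ℤ) → ℂ) (n : Fin s → ℤ) (α β γ δ : Fin s) : ℂ :=
  τ (n + Pi.single α 1 + Pi.single β 1) * τ (n + Pi.single γ 1 + Pi.single δ 1)
    - τ (n + Pi.single α 1 + Pi.single γ 1) * τ (n + Pi.single β 1 + Pi.single δ 1)
    + τ (n + Pi.single α 1 + Pi.single δ 1) * τ (n + Pi.single β 1 + Pi.single γ 1)

noncomputable def swapTwist (i j : Fin s) (τ : (Fin s → ℤ) → ℂ) (n : Fin s → ℤ) : ℂ :=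
  (-1) ^ (n i * n j) * τ (n ∘ Equiv.swap i j)

section
variable {i j : Fin s}

theorem single_add_single_comp_swap (a b : Fin s) :
    (Pi.single a 1 + Pi.single b 1 : Fin s → ℤ) ∘ Equiv.swap i j =
      Pi.single (Equiv.swap i j a) 1 + Pi.single (Equiv.swap i j b) 1 := by
  rw [Pi.add_comp, Pi.single_comp_equiv, Pi.single_comp_equiv, Equiv.symm_swap]

theorem swapTwist_add_mul_swapTwist_add (τ : (Fin s → ℤ) → ℂ) (n u v : Fin s → ℤ) :
    swapTwist i j τ (n + u) * swapTwist i j τ (n + v) =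
      (-1) ^ (2 * (n i * n j) + n i * (u + v) j + (u + v) i * n j) *
        ((-1) ^ (u i * u j) * (-1) ^ (v i * v j) *
          (τ (n ∘ Equiv.swap i j + u ∘ Equiv.swap i j) *
            τ (n ∘ Equiv.swap i j + v ∘ Equiv.swap i j))) := by
  have hexp : (n + u) i * (n + u) j + (n + v) i * (n + v) j =
      2 * (n i * n j) + n i * (u + v) j + (u + v) i * n j + u i * u j + v i * v j := by
    simp only [Pi.add_apply]
    ring
  rw [swapTwist, swapTwist, mul_mul_mul_comm, ← zpow_add₀ (by norm_num), hexp,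
    zpow_add₀ (by norm_num), zpow_add₀ (by norm_num), Pi.add_comp, Pi.add_comp]
  ring

theorem swap_lt_swap_of_val_eq_succ (hij : (j : ℕ) = i + 1) {a b : Fin s} (hab : a < b)
    (h : ¬(a = i ∧ b = j)) : Equiv.swap i j a < Equiv.swap i j b := by
  simp only [Fin.lt_def, Fin.ext_iff, Equiv.swap_apply_def] at *
  split_ifs <;> simp_all <;> omega

theorem not_eq_and_eq_of_lt_of_lt (hij : (j : ℕ) = i + 1) {a b c : Fin s} (hab : a < b)
    (hbc : b < c) : ¬(a = i ∧ c = j) := by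
  rintro ⟨rfl, rfl⟩
  rw [Fin.lt_def] at hab hbc
  omega

theorem neg_one_zpow_single_add_single (hij : i < j) {a b : Fin s} (hab : a < b) :
    (-1 : ℂ) ^ ((Pi.single a 1 + Pi.single b 1 : Fin s → ℤ) i *
        (Pi.single a 1 + Pi.single b 1 : Fin s → ℤ) j) = if a = i ∧ b = j then -1 else 1 := by
  have hexp : (Pi.single a 1 + Pi.single b 1 : Fin s → ℤ) i *
      (Pi.single a 1 + Pi.single b 1 : Fin s → ℤ) j = if a = i ∧ b = j then 1 else 0 := by
    simp only [Pi.add_apply, Pi.single_apply, Fin.lt_def, Fin.ext_iff] at *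
    split_ifs <;> omega
  rw [hexp]
  split_ifs <;> simp

theorem octahedralExpr_swapTwist_eq_zero_iff (hij : (j : ℕ) = i + 1) (τ : (Fin s → ℤ) → ℂ)
    (n : Fin s → ℤ) {a b c d : Fin s} (hab : a < b) (hbc : b < c) (hcd : c < d) :
    octahedralExpr (swapTwist i j τ) n a b c d = 0 ↔
      (if a = i ∧ b = j then -1 else 1) * (if c = i ∧ d = j then -1 else 1) *
            τ (n ∘ Equiv.swap i j + Pi.single (Equiv.swap i j a) 1 + Pi.single (Equiv.swap i j b) 1) *
            τ (n ∘ Equiv.swap i j + Pi.single (Equiv.swap i j c) 1 + Pi.single (Equiv.swap i j d) 1)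
          - τ (n ∘ Equiv.swap i j + Pi.single (Equiv.swap i j a) 1 + Pi.single (Equiv.swap i j c) 1) *
            τ (n ∘ Equiv.swap i j + Pi.single (Equiv.swap i j b) 1 + Pi.single (Equiv.swap i j d) 1)
          + (if b = i ∧ c = j then -1 else 1) *
            τ (n ∘ Equiv.swap i j + Pi.single (Equiv.swap i j a) 1 + Pi.single (Equiv.swap i j d) 1) *
            τ (n ∘ Equiv.swap i j + Pi.single (Equiv.swap i j b) 1 + Pi.single (Equiv.swap i j c) 1)
        = 0 := by
  have hij' : i < j := Fin.lt_def.mpr (by omega)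
  have hac := hab.trans hbc
  unfold octahedralExpr
  simp only [add_assoc n, swapTwist_add_mul_swapTwist_add, single_add_single_comp_swap,
    neg_one_zpow_single_add_single hij', hab, hbc, hcd, hac, hbc.trans hcd, hac.trans hcd,
    not_eq_and_eq_of_lt_of_lt hij hab hbc, not_eq_and_eq_of_lt_of_lt hij hbc hcd,
    not_eq_and_eq_of_lt_of_lt hij hac hcd, if_false, one_mul]
  rw [add_add_add_comm (Pi.single a 1) (Pi.single c 1),
    add_add_add_comm (Pi.single a 1) (Pi.single d 1), add_comm (Pi.single d 1) (Pi.single c 1),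
    ← mul_sub, ← mul_add, mul_eq_zero, or_iff_right (zpow_ne_zero _ (by norm_num))]
  simp only [← add_assoc, mul_assoc]

theorem OctahedralRelation.swapTwist {τ : (Fin s → ℤ) → ℂ} (hτ : OctahedralRelation τ)
    (hij : (j : ℕ) = i + 1) : OctahedralRelation (swapTwist i j τ) := by
  intro n hn a b c d hab hbc hcd
  have hac := hab.trans hbc
  have hbd := hbc.trans hcd
  have had := hac.trans hcd
  have hm : ∑ k, (n ∘ Equiv.swap i j) k = -2 := (Equiv.sum_comp _ n).trans hn
  change octahedralExpr _ n a b c d = 0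
  rw [octahedralExpr_swapTwist_eq_zero_iff hij τ n hab hbc hcd]
  by_cases h₁ : a = i ∧ b = j
  · obtain ⟨rfl, rfl⟩ := h₁
    simp only [Equiv.swap_apply_left, Equiv.swap_apply_right,
      Equiv.swap_apply_of_ne_of_ne hac.ne' hbc.ne', Equiv.swap_apply_of_ne_of_ne had.ne' hbd.ne',
      and_self, if_true, hac.ne', hab.ne', false_and, if_false, mul_one]
    rw [add_right_comm _ (Pi.single b 1) (Pi.single a 1)]
    linear_combination -hτ _ hm a b c d hab hbc hcd
  by_cases h₂ : b = i ∧ c = j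
  · obtain ⟨rfl, rfl⟩ := h₂
    simp only [Equiv.swap_apply_left, Equiv.swap_apply_right,
      Equiv.swap_apply_of_ne_of_ne hab.ne hac.ne, Equiv.swap_apply_of_ne_of_ne hbd.ne' hcd.ne',
      and_self, if_true, hab.ne, hbc.ne', false_and, if_false, mul_one, one_mul]
    rw [add_right_comm _ (Pi.single c 1) (Pi.single b 1)]
    linear_combination -hτ _ hm a b c d hab hbc hcd
  by_cases h₃ : c = i ∧ d = j
  · obtain ⟨rfl, rfl⟩ := h₃
    simp only [Equiv.swap_apply_left, Equiv.swap_apply_right,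
      Equiv.swap_apply_of_ne_of_ne hac.ne had.ne, Equiv.swap_apply_of_ne_of_ne hbc.ne hbd.ne,
      and_self, if_true, hac.ne, hbc.ne, false_and, if_false, one_mul]
    rw [add_right_comm _ (Pi.single d 1) (Pi.single c 1)]
    linear_combination -hτ _ hm a b c d hab hbc hcd
  simp only [h₁, h₂, h₃, if_false, one_mul]
  exact hτ _ hm _ _ _ _ (swap_lt_swap_of_val_eq_succ hij hab h₁)
    (swap_lt_swap_of_val_eq_succ hij hbc h₂) (swap_lt_swap_of_val_eq_succ hij hcd h₃)

end

theorem octahedral_adjacent_transposition_action_general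
    (s : ℕ) (τ : (Fin s → ℤ) → ℂ)
    (hτ : OctahedralRelation τ)
    (i : Fin s) (hi : i.val + 1 < s) :
    OctahedralRelation (fun n =>
      (-1 : ℂ) ^ (n i * n ⟨i.val + 1, hi⟩)
        * τ (n ∘ Equiv.swap i ⟨i.val + 1, hi⟩)) :=
  hτ.swapTwist rfl

/-- **Adjacent transpositions act on solutions of the octahedral relation:**
if `τ` satisfies the octahedral relation and `σ` is the transposition of two
adjacent indices `i` and `i+1`, then `τ'(n) = (−1)^{n_i n_{i+1}} τ(σ(n))`,
where `σ(n)` swaps the entries of `n` in positions `i` and `i+1`, also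
satisfies the octahedral relation. -/
theorem octahedral_adjacent_transposition_action
    (s : ℕ) (hs : 4 ≤ s) (τ : (Fin s → ℤ) → ℂ)
    (hτ : OctahedralRelation τ)
    (i : Fin s) (hi : i.val + 1 < s) :
    OctahedralRelation (fun n =>
      (-1 : ℂ) ^ (n i * n ⟨i.val + 1, hi⟩)
        * τ (n ∘ Equiv.swap i ⟨i.val + 1, hi⟩)) :=
  octahedral_adjacent_transposition_action_general s τ hτ i hi
end
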